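/- arXiv:1902.08530 — 3 statements merged into one kernel-verified Lean document; each statement's English description precedes it below -/
import Mathlib

section
/- Let (X, μ) be a measure space, 0 < p < ∞, and let (f_j) be a sequence in L^p(X, μ) with sup_j ‖f_j‖_p < ∞ that converges pointwise a.e. to a function f. Then lim_{j→∞} ∫_X | |f_j|^p − |f_j − f|^p − |f|^p | dμ = 0. -/
open MeasureTheory Filter Topology
open scoped ENNReal

/-!
For every `ε > 0` there is `C_ε` with `||a + b|^p - |a|^p| ≤ ε |a|^p + C_ε |b|^p`: when `|b|` is
small compared with `|a|` this is continuity of `s ↦ |1 + s|^p` at `0` after factoring out `|a|^p`,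
and otherwise both terms are crude multiples of `|b|^p`. With `a = f_j - g` and `b = g` the
integrand is at most `ε |f_j - g|^p + (C_ε + 1) |g|^p`. Fatou puts `g` in `L^p`, so the first term
has uniformly bounded integral, while the excess of the integrand over it is dominated by
`(C_ε + 1) |g|^p` and tends to `0` a.e., hence has vanishing integral by dominated convergence.
-/

theorem exists_abs_abs_add_rpow_sub_rpow_le {p : ℝ} (hp : 0 ≤ p) {ε : ℝ} (hε : 0 < ε) :
    ∃ C : ℝ, ∀ a b : ℝ, |(|a + b| ^ p - |a| ^ p)| ≤ ε * |a| ^ p + C * |b| ^ p := by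
  have hcont : ContinuousAt (fun s : ℝ => |1 + s| ^ p) 0 := by
    fun_prop (disch := norm_num)
  obtain ⟨δ, hδ, hclose⟩ := Metric.continuousAt_iff.1 hcont ε hε
  refine ⟨(δ⁻¹ + 1) ^ p + δ⁻¹ ^ p, fun a b => ?_⟩
  rcases lt_or_ge |b| (δ * |a|) with hb_small | hb_large
  · have ha : a ≠ 0 := by
      rintro rfl
      simp only [abs_zero, mul_zero] at hb_small
      exact (abs_nonneg b).not_gt hb_small
    have hsmall : |(|1 + b / a| ^ p - 1)| < ε := by
      have := @hclose (b / a) (by rwa [dist_zero_right, Real.norm_eq_abs, abs_div,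
        div_lt_iff₀ (abs_pos.2 ha)])
      simpa [Real.dist_eq] using this
    have hfactor : |a + b| ^ p = |a| ^ p * |1 + b / a| ^ p := by
      rw [← Real.mul_rpow (abs_nonneg _) (abs_nonneg _), ← abs_mul, mul_add, mul_one,
        mul_div_cancel₀ _ ha]
    calc |(|a + b| ^ p - |a| ^ p)| = |a| ^ p * |(|1 + b / a| ^ p - 1)| := by
          rw [hfactor, ← mul_sub_one, abs_mul, abs_of_nonneg (by positivity)]
      _ ≤ |a| ^ p * ε := by gcongr
      _ ≤ ε * |a| ^ p + ((δ⁻¹ + 1) ^ p + δ⁻¹ ^ p) * |b| ^ p := by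
          rw [mul_comm]
          exact le_add_of_nonneg_right (by positivity)
  · have ha_le : |a| ≤ δ⁻¹ * |b| := by rwa [inv_mul_eq_div, le_div_iff₀' hδ]
    have hab_le : |a + b| ≤ (δ⁻¹ + 1) * |b| := by linarith [abs_add_le a b]
    calc |(|a + b| ^ p - |a| ^ p)| ≤ |a + b| ^ p + |a| ^ p := by
          simpa only [abs_of_nonneg (Real.rpow_nonneg (abs_nonneg _) p)] using
            abs_sub (|a + b| ^ p) (|a| ^ p)
      _ ≤ ((δ⁻¹ + 1) * |b|) ^ p + (δ⁻¹ * |b|) ^ p := by gcongr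
      _ = ((δ⁻¹ + 1) ^ p + δ⁻¹ ^ p) * |b| ^ p := by
          rw [Real.mul_rpow (by positivity) (abs_nonneg _),
            Real.mul_rpow (by positivity) (abs_nonneg _), add_mul]
      _ ≤ ε * |a| ^ p + ((δ⁻¹ + 1) ^ p + δ⁻¹ ^ p) * |b| ^ p :=
          le_add_of_nonneg_left (by positivity)

theorem exists_abs_rpow_sub_rpow_sub_rpow_le {p : ℝ} (hp : 0 ≤ p) {ε : ℝ} (hε : 0 < ε) :
    ∃ C : ℝ, ∀ x y : ℝ,
      |(|x| ^ p - |x - y| ^ p - |y| ^ p)| ≤ ε * |x - y| ^ p + C * |y| ^ p := by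
  obtain ⟨C, hC⟩ := exists_abs_abs_add_rpow_sub_rpow_le hp hε
  refine ⟨C + 1, fun x y => ?_⟩
  have h := hC (x - y) y
  rw [sub_add_cancel] at h
  have htri := abs_sub (|x| ^ p - |x - y| ^ p) (|y| ^ p)
  rw [abs_of_nonneg (Real.rpow_nonneg (abs_nonneg y) p)] at htri
  linarith

theorem tendsto_abs_rpow_sub_rpow_sub_rpow {ι : Type*} {l : Filter ι} {p : ℝ} (hp : 0 < p)
    {u : ι → ℝ} {y : ℝ} (hu : Tendsto u l (𝓝 y)) :
    Tendsto (fun j => |(|u j| ^ p - |u j - y| ^ p - |y| ^ p)|) l (𝓝 0) := by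
  have hcont : Continuous fun t : ℝ => |(|t| ^ p - |t - y| ^ p - |y| ^ p)| := by
    fun_prop (disch := positivity)
  simpa [Function.comp_def, Real.zero_rpow hp.ne'] using (hcont.tendsto y).comp hu

namespace MeasureTheory

variable {α E : Type*} [MeasurableSpace α] {μ : Measure α} [NormedAddCommGroup E]

theorem memLp_of_tendsto_ae_of_eLpNorm_le {p : ℝ≥0∞} {f : ℕ → α → E} {g : α → E} {C : ℝ≥0∞}
    (hC : C ≠ ∞) (hf : ∀ j, AEStronglyMeasurable (f j) μ) (hfC : ∀ j, eLpNorm (f j) p μ ≤ C)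
    (hlim : ∀ᵐ x ∂μ, Tendsto (fun j => f j x) atTop (𝓝 (g x))) :
    MemLp g p μ :=
  ⟨aestronglyMeasurable_of_tendsto_ae atTop hf hlim,
    (Lp.eLpNorm_le_of_ae_tendsto (Eventually.of_forall hfC) hf hlim).trans_lt hC.lt_top⟩

theorem MemLp.integrable_norm_rpow_ofReal {p : ℝ} (hp : 0 < p) {f : α → E}
    (hf : MemLp f (ENNReal.ofReal p) μ) : Integrable (fun x => ‖f x‖ ^ p) μ := by
  simpa only [ENNReal.toReal_ofReal hp.le] using
    hf.integrable_norm_rpow (by simpa using hp) ENNReal.ofReal_ne_top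

theorem MemLp.integral_norm_rpow_le {p : ℝ} (hp : 0 < p) {f : α → E}
    (hf : MemLp f (ENNReal.ofReal p) μ) {C : ℝ≥0∞} (hC : C ≠ ∞)
    (hfC : eLpNorm f (ENNReal.ofReal p) μ ≤ C) :
    ∫ x, ‖f x‖ ^ p ∂μ ≤ C.toReal ^ p := by
  have hI : 0 ≤ ∫ x, ‖f x‖ ^ p ∂μ := integral_nonneg fun x => by positivity
  rw [hf.eLpNorm_eq_integral_rpow_norm (by simpa using hp) ENNReal.ofReal_ne_top,
    ENNReal.toReal_ofReal hp.le] at hfC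
  calc ∫ x, ‖f x‖ ^ p ∂μ = ((∫ x, ‖f x‖ ^ p ∂μ) ^ p⁻¹) ^ p := by
        rw [Real.rpow_inv_rpow hI hp.ne']
    _ ≤ C.toReal ^ p := by
        gcongr
        simpa [ENNReal.toReal_ofReal (Real.rpow_nonneg hI _)] using ENNReal.toReal_mono hC hfC

theorem tendsto_integral_of_le_mul_add {F H : ℕ → α → ℝ} {M : ℝ}
    (hF_nonneg : ∀ j x, 0 ≤ F j x) (hF_int : ∀ j, Integrable (F j) μ)
    (hH_nonneg : ∀ j x, 0 ≤ H j x) (hH_int : ∀ j, Integrable (H j) μ)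
    (hH_bdd : ∀ j, ∫ x, H j x ∂μ ≤ M)
    (hF_lim : ∀ᵐ x ∂μ, Tendsto (fun j => F j x) atTop (𝓝 0))
    (hdom : ∀ ε > 0, ∃ G : α → ℝ, Integrable G μ ∧ ∀ j x, F j x ≤ ε * H j x + G x) :
    Tendsto (fun j => ∫ x, F j x ∂μ) atTop (𝓝 0) := by
  have hM : 0 ≤ M := (integral_nonneg (hH_nonneg 0)).trans (hH_bdd 0)
  refine tendsto_order.2 ⟨fun a ha => Eventually.of_forall fun j =>
    ha.trans_le (integral_nonneg (hF_nonneg j)), fun δ hδ => ?_⟩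
  set ε := δ / (2 * (M + 1))
  have hε : 0 < ε := by positivity
  have hεM : ε * M ≤ δ / 2 := by
    rw [div_mul_eq_mul_div, div_le_div_iff₀ (by positivity) two_pos]
    nlinarith
  obtain ⟨G, hG, hFG⟩ := hdom ε hε
  set W : ℕ → α → ℝ := fun j x => max (F j x - ε * H j x) 0
  have hW_int : ∀ j, Integrable (W j) μ := fun j =>
    ((hF_int j).sub ((hH_int j).const_mul ε)).pos_part
  have hW_lim : Tendsto (fun j => ∫ x, W j x ∂μ) atTop (𝓝 0) := by
    have hW_le : ∀ j x, W j x ≤ F j x := fun j x =>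
      max_le (by linarith [mul_nonneg hε.le (hH_nonneg j x)]) (hF_nonneg j x)
    simpa using tendsto_integral_of_dominated_convergence (fun x => |G x|)
      (fun j => (hW_int j).aestronglyMeasurable) hG.abs
      (fun j => ae_of_all _ fun x => by
        rw [Real.norm_eq_abs, abs_of_nonneg (le_max_right _ _)]
        exact max_le ((sub_le_iff_le_add'.2 (hFG j x)).trans (le_abs_self _)) (abs_nonneg _))
      (hF_lim.mono fun x hx => tendsto_of_tendsto_of_tendsto_of_le_of_le tendsto_const_nhds hx
        (fun j => le_max_right _ _) (fun j => hW_le j x))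
  have hF_le : ∀ j, ∫ x, F j x ∂μ ≤ ∫ x, W j x ∂μ + ε * M := fun j =>
    calc ∫ x, F j x ∂μ ≤ ∫ x, (W j x + ε * H j x) ∂μ :=
          integral_mono (hF_int j) ((hW_int j).add ((hH_int j).const_mul ε))
            fun x => by linarith [le_max_left (F j x - ε * H j x) 0]
      _ = ∫ x, W j x ∂μ + ε * ∫ x, H j x ∂μ := by
          rw [integral_add (hW_int j) ((hH_int j).const_mul ε), integral_const_mul]
      _ ≤ ∫ x, W j x ∂μ + ε * M := by gcongr; exact hH_bdd j
  filter_upwards [hW_lim.eventually_lt_const (half_pos hδ)] with j hj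
  linarith [hF_le j]

end MeasureTheory

theorem brezis_lieb_general
    {X : Type*} [MeasurableSpace X] (μ : Measure X)
    (p : ℝ) (hp : 0 < p)
    (f : ℕ → X → ℝ) (g : X → ℝ)
    (hbdd : ∃ C : ℝ≥0∞, C ≠ ⊤ ∧ ∀ j, eLpNorm (f j) (ENNReal.ofReal p) μ ≤ C)
    (hmem : ∀ j, MemLp (f j) (ENNReal.ofReal p) μ)
    (hae : ∀ᵐ x ∂μ, Tendsto (fun j => f j x) atTop (nhds (g x))) :
    Tendsto (fun j => ∫ x, |(|f j x| ^ p - |f j x - g x| ^ p - |g x| ^ p)| ∂μ)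
      atTop (nhds 0) := by
  obtain ⟨C, hC, hfC⟩ := hbdd
  have hg : MemLp g (ENNReal.ofReal p) μ :=
    memLp_of_tendsto_ae_of_eLpNorm_le hC (fun j => (hmem j).1) hfC hae
  have hfg : ∀ j, MemLp (f j - g) (ENNReal.ofReal p) μ := fun j => (hmem j).sub hg
  have hint : ∀ {h : X → ℝ}, MemLp h (ENNReal.ofReal p) μ → Integrable (fun x => |h x| ^ p) μ :=
    fun hh => by simpa only [Real.norm_eq_abs] using hh.integrable_norm_rpow_ofReal hp
  obtain ⟨K, hK, hfgK⟩ : ∃ K ≠ ∞, ∀ j, eLpNorm (f j - g) (ENNReal.ofReal p) μ ≤ K :=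
    ⟨_, ENNReal.mul_ne_top (ENNReal.LpAddConst_lt_top _).ne (ENNReal.add_ne_top.2 ⟨hC, hg.2.ne⟩),
      fun j => (eLpNorm_sub_le' (hmem j).1 hg.1 _).trans
        (mul_le_mul_right (add_le_add_left (hfC j) _) _)⟩
  refine tendsto_integral_of_le_mul_add (H := fun j x => |f j x - g x| ^ p) (M := K.toReal ^ p)
    (fun j x => abs_nonneg _) (fun j => (((hint (hmem j)).sub (hint (hfg j))).sub (hint hg)).abs)
    (fun j x => by positivity) (fun j => hint (hfg j)) (fun j => ?_)
    (hae.mono fun x hx => tendsto_abs_rpow_sub_rpow_sub_rpow hp hx) (fun ε hε => ?_)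
  · simpa only [Real.norm_eq_abs, Pi.sub_apply] using
      (hfg j).integral_norm_rpow_le hp hK (hfgK j)
  · obtain ⟨D, hD⟩ := exists_abs_rpow_sub_rpow_sub_rpow_le hp.le hε
    exact ⟨fun x => D * |g x| ^ p, (hint hg).const_mul D, fun j x => hD (f j x) (g x)⟩

theorem brezis_lieb
    {X : Type*} [MeasurableSpace X] (μ : Measure X)
    (p : ℝ) (hp : 0 < p)
    (f : ℕ → X → ℝ) (g : X → ℝ)
    (hf_meas : ∀ j, AEStronglyMeasurable (f j) μ)
    (hbdd : ∃ C : ℝ≥0∞, C ≠ ⊤ ∧ ∀ j, eLpNorm (f j) (ENNReal.ofReal p) μ ≤ C)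
    (hmem : ∀ j, MemLp (f j) (ENNReal.ofReal p) μ)
    (hae : ∀ᵐ x ∂μ, Tendsto (fun j => f j x) atTop (nhds (g x))) :
    Tendsto (fun j => ∫ x, |(|f j x| ^ p - |f j x - g x| ^ p - |g x| ^ p)| ∂μ)
      atTop (nhds 0) :=
  brezis_lieb_general μ p hp f g hbdd hmem hae
end

section
/- Let (X, μ) be a measure space, u : X → ℝ measurable, τ > 0, b ≥ 1/16, and let u_τ = Φ ∘ u with Φ as the truncation defined by Φ(s) = (b−1/16)τ for s > bτ, s − τ/16 for τ/16 ≤ s ≤ bτ, 0 for |s| < τ/16, s + τ/16 for −bτ ≤ s ≤ −τ/16, and −(b−1/16)τ for s < −bτ. Then μ({x : |u(x) − u_τ(x)| > τ/8}) ≤ (16/τ) ∫_X |u| 𝟙_{|u| > bτ} dμ. -/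
open MeasureTheory

/-- The truncation function used in the proof of the refined Sobolev inequality. -/
noncomputable def truncΦ (τ b : ℝ) (s : ℝ) : ℝ :=
  if b * τ < s then (b - 1/16) * τ
  else if τ/16 ≤ s then s - τ/16
  else if -τ/16 < s then 0
  else if -(b * τ) ≤ s then s + τ/16
  else -((b - 1/16) * τ)

/-! On `[-bτ, bτ]` the truncation moves every point by at most `τ/16`, so an error above `τ/8`
can only occur where `|u| > bτ`; Chebyshev's inequality on that set, where
`1 ≤ (16/τ) |u|` because `b ≥ 1/16`, gives the bound. -/

theorem abs_sub_truncΦ_le {τ b s : ℝ} (hτ : 0 ≤ τ) (hs : |s| ≤ b * τ) :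
    |s - truncΦ τ b s| ≤ τ / 16 := by
  obtain ⟨hs_lower, hs_upper⟩ := abs_le.mp hs
  unfold truncΦ
  split_ifs <;> rw [abs_le] <;> constructor <;> linarith

theorem measure_le_mul_setLIntegral {α : Type*} [MeasurableSpace α] {μ : Measure α}
    {S : Set α} {f : α → ENNReal} {c : ENNReal} (hS : MeasurableSet S) (hc : c ≠ ⊤)
    (hf : ∀ x ∈ S, 1 ≤ c * f x) :
    μ S ≤ c * ∫⁻ x in S, f x ∂μ := by
  calc μ S = ∫⁻ _ in S, 1 ∂μ := (setLIntegral_one S).symm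
    _ ≤ ∫⁻ x in S, c * f x ∂μ := setLIntegral_mono' hS hf
    _ = c * ∫⁻ x in S, f x ∂μ := lintegral_const_mul' c f hc

theorem truncation_error_chebyshev
    {X : Type*} [MeasurableSpace X] (μ : Measure X)
    (u : X → ℝ) (hu : Measurable u) (τ b : ℝ) (hτ : 0 < τ) (hb : 1/16 ≤ b) :
    μ {x | τ/8 < |u x - truncΦ τ b (u x)|}
      ≤ ENNReal.ofReal (16/τ) *
        ∫⁻ x, ENNReal.ofReal
          (|u x| * Set.indicator {x : X | b * τ < |u x|} (fun _ => (1 : ℝ)) x) ∂μ := by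
  set S : Set X := {x : X | b * τ < |u x|}
  have hS : MeasurableSet S := measurableSet_lt measurable_const hu.abs
  have h_subset : {x | τ/8 < |u x - truncΦ τ b (u x)|} ⊆ S := fun x hx =>
    lt_of_not_ge fun h_small =>
      (abs_sub_truncΦ_le hτ.le h_small).not_gt (by linarith [hx.out])
  have h_integrand : (fun x => ENNReal.ofReal (|u x| * S.indicator (fun _ => (1 : ℝ)) x))
      = S.indicator (fun x => ENNReal.ofReal |u x|) := by
    funext x
    by_cases hx : x ∈ S <;> simp [hx]
  have h_chebyshev : ∀ x ∈ S, 1 ≤ ENNReal.ofReal (16/τ) * ENNReal.ofReal |u x| := fun x hx => by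
    rw [← ENNReal.ofReal_mul (by positivity), ENNReal.one_le_ofReal, div_mul_eq_mul_div,
      one_le_div hτ]
    nlinarith [hx.out]
  calc μ {x | τ/8 < |u x - truncΦ τ b (u x)|} ≤ μ S := measure_mono h_subset
    _ ≤ ENNReal.ofReal (16/τ) * ∫⁻ x in S, ENNReal.ofReal |u x| ∂μ :=
        measure_le_mul_setLIntegral hS ENNReal.ofReal_ne_top h_chebyshev
    _ = _ := by rw [h_integrand, lintegral_indicator hS]
end

section
/- Let d ≥ 1, D > 0, 1 < r < ∞ with conjugate exponent r', and 0 < β < D/r'. Let w be a nonnegative homogeneous weight of degree D − d on ℝ^d with finite, positive sphere integral a = ∫_{S^{d-1}} w dσ, and fix t > 0. Suppose K : ℝ^d → ℝ is measurable with 0 ≤ K(y) ≤ C t^{-D/2} for all y and ∫_{ℝ^d} K(y)^{r'} w(y) dy ≤ B t^{-D(r'−1)/2}. Then ∫_{ℝ^d} K(y)^{r'} |y|^{-β r'} w(y) dy ≤ C^{r'} t^{-Dr'/2} · (a/(D − βr')) t^{(D−βr')/2} + B t^{-βr'/2} t^{-D(r'−1)/2}; in particular the integral is finite. -/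
/-!
Split the integral at `‖y‖ = √t`. On the ball, bound `K ^ r'` by its supremum and integrate
`‖y‖ ^ (-β r') w y` in polar coordinates: homogeneity of `w` turns it into
`a * ∫₀^√t x ^ (D - β r' - 1) dx`, which is finite because `β r' < D`. Off the ball,
`‖y‖ ^ (-β r') ≤ t ^ (-β r' / 2)`, and what remains is the assumed bound on `∫ K ^ r' w`.
-/
open MeasureTheory Set Metric
open scoped ENNReal

theorem setLIntegral_Ioc_zero_rpow {s R : ℝ} (hs : -1 < s) (hR : 0 ≤ R) :
    ∫⁻ x in Ioc 0 R, ENNReal.ofReal (x ^ s) = ENNReal.ofReal (R ^ (s + 1) / (s + 1)) := by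
  rw [← ofReal_integral_eq_lintegral_ofReal (intervalIntegral.intervalIntegrable_rpow' hs).1
      ((ae_restrict_mem measurableSet_Ioc).mono fun x hx => Real.rpow_nonneg hx.1.le s),
    ← intervalIntegral.integral_of_le hR, integral_rpow (Or.inl hs),
    Real.zero_rpow (by linarith), sub_zero]

section Polar

variable {E : Type*} [NormedAddCommGroup E] [NormedSpace ℝ E] [MeasurableSpace E] [BorelSpace E]
  [FiniteDimensional ℝ E] [Nontrivial E] (μ : Measure E) [μ.IsAddHaarMeasure]

theorem lintegral_eq_lintegral_sphere_lintegral_Ioi {f : E → ℝ≥0∞} (hf : Measurable f) :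
    ∫⁻ y, f y ∂μ = ∫⁻ s : sphere (0 : E) 1,
      (∫⁻ x in Ioi (0 : ℝ), ENNReal.ofReal (x ^ (Module.finrank ℝ E - 1)) * f (x • (s : E)))
      ∂μ.toSphere := by
  have hF : Measurable fun p : sphere (0 : E) 1 × Ioi (0 : ℝ) => f ((p.2 : ℝ) • (p.1 : E)) :=
    hf.comp (by fun_prop)
  calc ∫⁻ y, f y ∂μ = ∫⁻ y : ({0}ᶜ : Set E), f y ∂μ.comap (↑) := by
        rw [lintegral_subtype_comap (measurableSet_singleton _).compl, restrict_compl_singleton]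
    _ = ∫⁻ p, f ((p.2 : ℝ) • (p.1 : E))
          ∂μ.toSphere.prod (Measure.volumeIoiPow (Module.finrank ℝ E - 1)) := by
        rw [← (Measure.measurePreserving_homeomorphUnitSphereProd μ).lintegral_comp hF]
        refine lintegral_congr fun y => ?_
        simp [smul_inv_smul₀ (norm_ne_zero_iff.2 y.2)]
    _ = _ := by
        rw [lintegral_prod _ hF.aemeasurable]
        refine lintegral_congr fun s => ?_
        rw [Measure.volumeIoiPow, lintegral_withDensity_eq_lintegral_mul _ (by fun_prop)
          (g := fun x : Ioi (0 : ℝ) => f ((x : ℝ) • (s : E)))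
          (hf.comp (by fun_prop)), ← lintegral_subtype_comap measurableSet_Ioi]
        rfl

theorem lintegral_comp_norm_mul_of_homogeneous {D : ℝ} {w : E → ℝ} (hw_meas : Measurable w)
    (hw_hom : ∀ c : ℝ, 0 < c → ∀ x, w (c • x) = c ^ (D - Module.finrank ℝ E) * w x)
    {g : ℝ → ℝ≥0∞} (hg : Measurable g) :
    ∫⁻ y, g ‖y‖ * ENNReal.ofReal (w y) ∂μ =
      (∫⁻ s : sphere (0 : E) 1, ENNReal.ofReal (w s) ∂μ.toSphere) *
        ∫⁻ x in Ioi (0 : ℝ), ENNReal.ofReal (x ^ (D - 1)) * g x := by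
  have hdim : 1 ≤ Module.finrank ℝ E := Module.finrank_pos
  rw [lintegral_eq_lintegral_sphere_lintegral_Ioi μ (by fun_prop), mul_comm,
    ← lintegral_const_mul'' _ (by fun_prop)]
  refine lintegral_congr fun s => ?_
  rw [← lintegral_mul_const' _ _ ENNReal.ofReal_ne_top]
  refine setLIntegral_congr_fun measurableSet_Ioi fun x (hx : 0 < x) => ?_
  have hnorm : ‖x • (s : E)‖ = x := by simp [norm_smul, hx.le]
  have hpow : x ^ (Module.finrank ℝ E - 1) * x ^ (D - Module.finrank ℝ E) = x ^ (D - 1) := by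
    rw [← Real.rpow_natCast, Nat.cast_sub hdim, ← Real.rpow_add hx]
    ring_nf
  rw [hnorm, hw_hom x hx, ENNReal.ofReal_mul (by positivity), ← hpow,
    ENNReal.ofReal_mul (by positivity)]
  ring

theorem setLIntegral_closedBall_norm_rpow_mul_of_homogeneous {D γ R : ℝ} (hγ : γ < D) (hR : 0 ≤ R)
    {w : E → ℝ} (hw_meas : Measurable w)
    (hw_hom : ∀ c : ℝ, 0 < c → ∀ x, w (c • x) = c ^ (D - Module.finrank ℝ E) * w x) :
    ∫⁻ y in closedBall 0 R, ENNReal.ofReal (‖y‖ ^ (-γ) * w y) ∂μ =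
      (∫⁻ s : sphere (0 : E) 1, ENNReal.ofReal (w s) ∂μ.toSphere) *
        ENNReal.ofReal (R ^ (D - γ) / (D - γ)) := by
  set g : ℝ → ℝ≥0∞ := (Iic R).indicator fun x => ENNReal.ofReal (x ^ (-γ))
  have hg : Measurable g := (by fun_prop : Measurable _).indicator measurableSet_Iic
  have hball : ∫⁻ y in closedBall 0 R, ENNReal.ofReal (‖y‖ ^ (-γ) * w y) ∂μ =
      ∫⁻ y, g ‖y‖ * ENNReal.ofReal (w y) ∂μ := by
    rw [← lintegral_indicator measurableSet_closedBall]
    refine lintegral_congr fun y => ?_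
    by_cases hy : ‖y‖ ≤ R <;>
      simp [g, indicator, hy, ENNReal.ofReal_mul (Real.rpow_nonneg (norm_nonneg y) _)]
  have hradial : ∫⁻ x in Ioi (0 : ℝ), ENNReal.ofReal (x ^ (D - 1)) * g x =
      ∫⁻ x in Ioc 0 R, ENNReal.ofReal (x ^ (D - γ - 1)) := by
    rw [← Ioi_inter_Iic, inter_comm, ← Measure.restrict_restrict measurableSet_Iic,
      ← lintegral_indicator measurableSet_Iic]
    refine setLIntegral_congr_fun measurableSet_Ioi fun x (hx : 0 < x) => ?_
    by_cases hxR : x ∈ Iic R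
    · simp only [g, indicator_of_mem hxR]
      rw [← ENNReal.ofReal_mul (by positivity), ← Real.rpow_add hx]
      ring_nf
    · simp only [g, indicator_of_notMem hxR, mul_zero]
  rw [hball, lintegral_comp_norm_mul_of_homogeneous μ hw_meas hw_hom hg, hradial,
    setLIntegral_Ioc_zero_rpow (by linarith) hR, sub_add_cancel]

theorem setLIntegral_closedBall_mul_norm_rpow_mul_le_of_homogeneous {D γ R M : ℝ} (hγ : γ < D)
    (hR : 0 ≤ R) (hM : 0 ≤ M) {F w : E → ℝ} (hF : ∀ y, F y ≤ M) (hw_nonneg : ∀ y, 0 ≤ w y)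
    (hw_meas : Measurable w)
    (hw_hom : ∀ c : ℝ, 0 < c → ∀ x, w (c • x) = c ^ (D - Module.finrank ℝ E) * w x) :
    ∫⁻ y in closedBall 0 R, ENNReal.ofReal (F y * ‖y‖ ^ (-γ) * w y) ∂μ ≤
      ENNReal.ofReal M * ((∫⁻ s : sphere (0 : E) 1, ENNReal.ofReal (w s) ∂μ.toSphere) *
        ENNReal.ofReal (R ^ (D - γ) / (D - γ))) := by
  calc ∫⁻ y in closedBall 0 R, ENNReal.ofReal (F y * ‖y‖ ^ (-γ) * w y) ∂μ
      ≤ ∫⁻ y in closedBall 0 R, ENNReal.ofReal M * ENNReal.ofReal (‖y‖ ^ (-γ) * w y) ∂μ := by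
        refine lintegral_mono fun y => ?_
        rw [← ENNReal.ofReal_mul hM, mul_assoc]
        exact ENNReal.ofReal_le_ofReal
          (mul_le_mul_of_nonneg_right (hF y) (mul_nonneg (by positivity) (hw_nonneg y)))
    _ = _ := by
        rw [lintegral_const_mul' _ _ ENNReal.ofReal_ne_top,
          setLIntegral_closedBall_norm_rpow_mul_of_homogeneous μ hγ hR hw_meas hw_hom]

end Polar

theorem setLIntegral_compl_closedBall_mul_norm_rpow_mul_le {E : Type*} [NormedAddCommGroup E]
    [MeasurableSpace E] [OpensMeasurableSpace E] (μ : Measure E) {γ R : ℝ} (hγ : 0 ≤ γ)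
    (hR : 0 < R) {F w : E → ℝ} (hF_nonneg : ∀ y, 0 ≤ F y) (hw_nonneg : ∀ y, 0 ≤ w y) :
    ∫⁻ y in (closedBall 0 R)ᶜ, ENNReal.ofReal (F y * ‖y‖ ^ (-γ) * w y) ∂μ ≤
      ENNReal.ofReal (R ^ (-γ)) * ∫⁻ y, ENNReal.ofReal (F y * w y) ∂μ := by
  calc ∫⁻ y in (closedBall 0 R)ᶜ, ENNReal.ofReal (F y * ‖y‖ ^ (-γ) * w y) ∂μ
      ≤ ∫⁻ y in (closedBall 0 R)ᶜ, ENNReal.ofReal (R ^ (-γ)) * ENNReal.ofReal (F y * w y) ∂μ := by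
        refine setLIntegral_mono' measurableSet_closedBall.compl fun y hy => ?_
        have hRy : R < ‖y‖ := by simpa using hy
        rw [← ENNReal.ofReal_mul (by positivity), mul_right_comm, mul_comm]
        exact ENNReal.ofReal_le_ofReal (mul_le_mul_of_nonneg_right
          (Real.rpow_le_rpow_of_nonpos hR hRy.le (neg_nonpos.2 hγ))
          (mul_nonneg (hF_nonneg y) (hw_nonneg y)))
    _ ≤ ∫⁻ y, ENNReal.ofReal (R ^ (-γ)) * ENNReal.ofReal (F y * w y) ∂μ :=
        setLIntegral_le_lintegral _ _
    _ = _ := lintegral_const_mul' _ _ ENNReal.ofReal_ne_top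

theorem heat_kernel_weighted_integral_bound_general
    (d : ℕ) (hd : 1 ≤ d) (D : ℝ)
    (r r' : ℝ) (hr : 1 < r) (hconj : 1/r + 1/r' = 1)
    (β : ℝ) (hβ0 : 0 < β) (hβ : β < D / r')
    (w : EuclideanSpace ℝ (Fin d) → ℝ)
    (hw_nonneg : ∀ x, 0 ≤ w x) (hw_meas : Measurable w)
    (hw_hom : ∀ (c : ℝ) (x : EuclideanSpace ℝ (Fin d)),
      w (c • x) = |c| ^ (D - d) * w x)
    (a : ℝ) (ha_pos : 0 < a)
    (ha : a = ∫ x' : Metric.sphere (0 : EuclideanSpace ℝ (Fin d)) 1,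
      w x' ∂((volume : Measure (EuclideanSpace ℝ (Fin d))).toSphere))
    (t : ℝ) (ht : 0 < t)
    (K : EuclideanSpace ℝ (Fin d) → ℝ)
    (C B : ℝ) (hC : 0 < C) (hB : 0 < B)
    (hK_bd : ∀ y, 0 ≤ K y ∧ K y ≤ C * t ^ (-D/2))
    (hK_int : ∫⁻ y, ENNReal.ofReal (K y ^ r' * w y) ∂volume
      ≤ ENNReal.ofReal (B * t ^ (-D * (r' - 1) / 2))) :
    ∫⁻ y, ENNReal.ofReal (K y ^ r' * ‖y‖ ^ (-(β * r')) * w y) ∂volume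
      ≤ ENNReal.ofReal
          (C ^ r' * t ^ (-D * r' / 2) * (a / (D - β * r')) * t ^ ((D - β * r') / 2)
            + B * t ^ (-(β * r') / 2) * t ^ (-D * (r' - 1) / 2)) := by
  have hr' : 0 < r' := one_div_pos.mp (by linarith [(div_lt_one (by linarith)).2 hr])
  have hβr' : β * r' < D := (lt_div_iff₀ hr').1 hβ
  have : Nonempty (Fin d) := ⟨⟨0, hd⟩⟩
  have hw_hom' (c : ℝ) (hc : 0 < c) (x : EuclideanSpace ℝ (Fin d)) :
      w (c • x) = c ^ (D - Module.finrank ℝ (EuclideanSpace ℝ (Fin d))) * w x := by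
    rw [hw_hom, abs_of_pos hc, finrank_euclideanSpace_fin]
  have hsphere : ∫⁻ s : sphere (0 : EuclideanSpace ℝ (Fin d)) 1, ENNReal.ofReal (w s)
      ∂(volume : Measure (EuclideanSpace ℝ (Fin d))).toSphere = ENNReal.ofReal a := by
    rw [ha]
    exact (ofReal_integral_eq_lintegral_ofReal (.of_integral_ne_zero
      (f := fun s : sphere (0 : EuclideanSpace ℝ (Fin d)) 1 => w s) (ha ▸ ha_pos.ne'))
      (ae_of_all _ fun s => hw_nonneg s)).symm
  have hK (y : EuclideanSpace ℝ (Fin d)) : K y ^ r' ≤ C ^ r' * t ^ (-D * r' / 2) := by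
    calc K y ^ r' ≤ (C * t ^ (-D / 2)) ^ r' :=
          Real.rpow_le_rpow (hK_bd y).1 (hK_bd y).2 hr'.le
      _ = C ^ r' * t ^ (-D * r' / 2) := by
          rw [Real.mul_rpow hC.le (by positivity), ← Real.rpow_mul ht.le]
          ring_nf
  have hsqrt (s : ℝ) : √t ^ s = t ^ (s / 2) := by
    rw [Real.sqrt_eq_rpow, ← Real.rpow_mul ht.le]
    ring_nf
  rw [← lintegral_add_compl _ (measurableSet_closedBall (x := 0) (ε := √t))]
  calc _ ≤ ENNReal.ofReal (C ^ r' * t ^ (-D * r' / 2)) * (ENNReal.ofReal a *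
          ENNReal.ofReal (√t ^ (D - β * r') / (D - β * r'))) +
        ENNReal.ofReal (√t ^ (-(β * r'))) * ENNReal.ofReal (B * t ^ (-D * (r' - 1) / 2)) := by
        gcongr
        · exact hsphere ▸ setLIntegral_closedBall_mul_norm_rpow_mul_le_of_homogeneous _ hβr'
            (Real.sqrt_nonneg t) (by positivity) hK hw_nonneg hw_meas hw_hom'
        · exact (setLIntegral_compl_closedBall_mul_norm_rpow_mul_le _ (by positivity)
            (Real.sqrt_pos.2 ht) (fun y => Real.rpow_nonneg (hK_bd y).1 r') hw_nonneg).trans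
            (by gcongr)
    _ = _ := by
        rw [← ENNReal.ofReal_mul ha_pos.le, ← ENNReal.ofReal_mul (by positivity),
          ← ENNReal.ofReal_mul (by positivity), ← ENNReal.ofReal_add (by positivity)
            (by positivity), hsqrt, hsqrt]
        ring_nf

theorem heat_kernel_weighted_integral_bound
    (d : ℕ) (hd : 1 ≤ d) (D : ℝ) (hD : 0 < D)
    (r r' : ℝ) (hr : 1 < r) (hconj : 1/r + 1/r' = 1)
    (β : ℝ) (hβ0 : 0 < β) (hβ : β < D / r')
    (w : EuclideanSpace ℝ (Fin d) → ℝ)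
    (hw_nonneg : ∀ x, 0 ≤ w x) (hw_meas : Measurable w)
    (hw_hom : ∀ (c : ℝ) (x : EuclideanSpace ℝ (Fin d)),
      w (c • x) = |c| ^ (D - d) * w x)
    (a : ℝ) (ha_pos : 0 < a)
    (ha : a = ∫ x' : Metric.sphere (0 : EuclideanSpace ℝ (Fin d)) 1,
      w x' ∂((volume : Measure (EuclideanSpace ℝ (Fin d))).toSphere))
    (t : ℝ) (ht : 0 < t)
    (K : EuclideanSpace ℝ (Fin d) → ℝ) (hK_meas : Measurable K)
    (C B : ℝ) (hC : 0 < C) (hB : 0 < B)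
    (hK_bd : ∀ y, 0 ≤ K y ∧ K y ≤ C * t ^ (-D/2))
    (hK_int : ∫⁻ y, ENNReal.ofReal (K y ^ r' * w y) ∂volume
      ≤ ENNReal.ofReal (B * t ^ (-D * (r' - 1) / 2))) :
    ∫⁻ y, ENNReal.ofReal (K y ^ r' * ‖y‖ ^ (-(β * r')) * w y) ∂volume
      ≤ ENNReal.ofReal
          (C ^ r' * t ^ (-D * r' / 2) * (a / (D - β * r')) * t ^ ((D - β * r') / 2)
            + B * t ^ (-(β * r') / 2) * t ^ (-D * (r' - 1) / 2)) :=
  heat_kernel_weighted_integral_bound_general d hd D r r' hr hconj β hβ0 hβ w hw_nonneg hw_meas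
    hw_hom a ha_pos ha t ht K C B hC hB hK_bd hK_int
end
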